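/- Let r ≥ 2 and define on the complex vector space V_r with basis e_0, …, e_{r−2} the product e_a • e_b = Σ_{c=0}^{r−2} N_{ab}^c e_c, where N_{ab}^c = (2/r) Σ_{k=1}^{r−1} sin((a+1)kπ/r) sin((b+1)kπ/r) sin((c+1)kπ/r) / sin(kπ/r). Then the vectors v_k = √(2/r) Σ_{a=0}^{r−2} sin((a+1)kπ/r) e_a, for 1 ≤ k ≤ r−1, satisfy v_k • v_l = (√(r/2) / sin(kπ/r)) · δ_{k,l} · v_k. In particular, the rescaled vectors (sin(kπ/r)/√(r/2)) v_k form a basis of idempotents, so (V_r, •) is a semisimple commutative algebra. -/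

import Mathlib

/-!
The matrix `S k a = √(2/r) sin((a+1)kπ/r)` (`1 ≤ k ≤ r-1`, `0 ≤ a ≤ r-2`) is orthogonal:
by product-to-sum, its orthogonality relations reduce to the Dirichlet-kernel sum
`∑_{j<r} cos(jnπ/r) = (1 - (-1)^n)/2` for `0 < |n| < 2r`. The Verlinde formula reads
`N_{ab}^c = ∑_j w_j S j a S j b S j c` with `w_j = √(r/2)/sin(jπ/r)`, so contracting with
`S k a S l b` collapses the sums over `a` and `b` to `δ_{kj} δ_{lj}`.
-/

open Real Finset

/-- Verlinde (fusion) structure constants for sl2 at level `r−2`: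
`N_{ab}^c = (2/r) Σ_{k=1}^{r−1} sin((a+1)kπ/r) sin((b+1)kπ/r) sin((c+1)kπ/r) / sin(kπ/r)`. -/
noncomputable def Nfus (r a b c : ℕ) : ℝ :=
  (2 / r) * ∑ k ∈ Finset.Icc 1 (r - 1),
    Real.sin ((a + 1) * k * π / r) * Real.sin ((b + 1) * k * π / r) *
      Real.sin ((c + 1) * k * π / r) / Real.sin (k * π / r)

/-- Coordinates of the normalized idempotent vector `v_k` in the basis `e_0, …, e_{r−2}`. -/
noncomputable def vIdem (r k a : ℕ) : ℝ :=
  Real.sqrt (2 / r) * Real.sin ((a + 1) * k * π / r)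

theorem two_sin_half_mul_sum_range_cos (N : ℕ) (x : ℝ) :
    2 * sin (x / 2) * ∑ j ∈ range N, cos (j * x) = sin ((2 * N - 1) * x / 2) + sin (x / 2) := by
  induction N with
  | zero => simp [neg_div, sin_neg]
  | succ N ih =>
    have hstep : 2 * sin (x / 2) * cos (N * x)
        = sin ((2 * (N + 1 : ℕ) - 1) * x / 2) - sin ((2 * N - 1) * x / 2) := by
      rw [sin_sub_sin]; push_cast; ring_nf
    rw [sum_range_succ, mul_add, ih, hstep]
    ring

theorem sum_range_cos_int_mul_pi_div (r : ℕ) (n : ℤ) (hn0 : n ≠ 0) (hn : |n| < 2 * r) :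
    ∑ j ∈ range r, cos (j * (n * π / r)) = if Even n then 0 else 1 := by
  have hr : (0 : ℝ) < r := by
    have : (0 : ℤ) < r := by linarith [abs_pos.mpr hn0]
    exact_mod_cast this
  have hn' : |(n : ℝ)| < 2 * r := by exact_mod_cast hn
  have hsin : sin (n * π / r / 2) ≠ 0 := by
    have hlt : |(n * π / r / 2 : ℝ)| < π := by
      rw [abs_div, abs_div, abs_mul, abs_of_pos pi_pos, abs_of_pos hr, abs_two,
        div_div, div_lt_iff₀ (by positivity)]
      nlinarith [pi_pos]
    rw [Ne, sin_eq_zero_iff_of_lt_of_lt (neg_lt_of_abs_lt hlt) (lt_of_abs_lt hlt)]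
    have : (n : ℝ) ≠ 0 := by exact_mod_cast hn0
    positivity
  have key := two_sin_half_mul_sum_range_cos r (n * π / r)
  rw [show (2 * r - 1) * (n * π / r) / 2 = n * π - n * π / r / 2 by field_simp,
    sin_int_mul_pi_sub, neg_one_zpow_eq_ite] at key
  apply mul_left_cancel₀ (mul_ne_zero two_ne_zero hsin)
  rw [key]
  split_ifs <;> ring

theorem sum_range_sin_mul_sin (r k m : ℕ) (hk0 : 0 < k) (hkr : k < r) (hm0 : 0 < m)
    (hmr : m < r) :
    ∑ j ∈ range r, sin (j * (k * π / r)) * sin (j * (m * π / r))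
      = if k = m then (r : ℝ) / 2 else 0 := by
  have hprod : ∀ j : ℕ, sin (j * (k * π / r)) * sin (j * (m * π / r)) =
      (cos (j * (((k - m : ℤ) : ℝ) * π / r)) - cos (j * (((k + m : ℤ) : ℝ) * π / r))) / 2 := by
    intro j
    have := two_mul_sin_mul_sin (j * (k * π / r)) (j * (m * π / r))
    push_cast
    rw [show j * ((k - m) * π / r) = j * (k * π / r) - j * (m * π / r) by ring,
      show j * ((k + m) * π / r) = j * (k * π / r) + j * (m * π / r) by ring]
    linarith
  have hplus := sum_range_cos_int_mul_pi_div r (k + m) (by omega) (by rw [abs_lt]; omega)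
  rw [sum_congr rfl fun j _ => hprod j, ← sum_div, sum_sub_distrib, hplus]
  by_cases hkm : k = m
  · subst hkm
    simp
  · have hpar : Even ((k : ℤ) + m) ↔ Even ((k : ℤ) - m) := by
      rw [Int.even_add, Int.even_sub]
    rw [sum_range_cos_int_mul_pi_div r (k - m) (by omega) (by rw [abs_lt]; omega), if_neg hkm]
    simp only [hpar, sub_self, zero_div]

theorem sum_vIdem_mul_vIdem (r k m : ℕ) (hk0 : 0 < k) (hkr : k < r) (hm0 : 0 < m)
    (hmr : m < r) :
    ∑ a ∈ range (r - 1), vIdem r k a * vIdem r m a = if k = m then 1 else 0 := by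
  have hshift : ∑ a ∈ range (r - 1), sin ((a + 1) * k * π / r) * sin ((a + 1) * m * π / r)
      = ∑ j ∈ range r, sin (j * (k * π / r)) * sin (j * (m * π / r)) := by
    obtain ⟨n, rfl⟩ : ∃ n, r = n + 1 := ⟨r - 1, by omega⟩
    rw [sum_range_succ']
    simp only [Nat.add_sub_cancel, Nat.cast_add, Nat.cast_one, CharP.cast_eq_zero, zero_mul,
      sin_zero, add_zero]
    refine sum_congr rfl fun a _ => ?_
    ring_nf
  have hr : (0 : ℝ) < r := by exact_mod_cast hk0.trans hkr
  have hsq : √(2 / r) * √(2 / r) = 2 / r := mul_self_sqrt (by positivity)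
  calc ∑ a ∈ range (r - 1), vIdem r k a * vIdem r m a
      = 2 / r * ∑ a ∈ range (r - 1), sin ((a + 1) * k * π / r) * sin ((a + 1) * m * π / r) := by
        rw [mul_sum]
        refine sum_congr rfl fun a _ => ?_
        rw [vIdem, vIdem]
        linear_combination (sin ((a + 1) * k * π / r) * sin ((a + 1) * m * π / r)) * hsq
    _ = if k = m then 1 else 0 := by
        rw [hshift, sum_range_sin_mul_sin r k m hk0 hkr hm0 hmr]
        split_ifs
        · field_simp
        · ring

theorem Nfus_eq_sum_vIdem (r a b c : ℕ) (hr : 0 < r) :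
    Nfus r a b c = ∑ j ∈ Icc 1 (r - 1),
      √(r / 2) / sin (j * π / r) * (vIdem r j a * vIdem r j b * vIdem r j c) := by
  have hr' : (0 : ℝ) < r := by exact_mod_cast hr
  have hsq : √(2 / r) * √(2 / r) = 2 / r := mul_self_sqrt (by positivity)
  have hinv : √(r / 2) * √(2 / r) = 1 := by
    rw [← sqrt_mul (by positivity), div_mul_div_comm, mul_comm (r : ℝ), div_self (by positivity),
      sqrt_one]
  rw [Nfus, mul_sum]
  refine sum_congr rfl fun j _ => ?_
  simp only [vIdem]
  linear_combination -(sin ((a + 1) * j * π / r) * sin ((b + 1) * j * π / r) *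
    sin ((c + 1) * j * π / r) / sin (j * π / r)) * (√(2 / r) * √(2 / r) * hinv + hsq)

theorem stmt_6_general (r : ℕ) (k l : ℕ) (hk1 : 1 ≤ k) (hk2 : k ≤ r - 1)
    (hl1 : 1 ≤ l) (hl2 : l ≤ r - 1) (c : ℕ) :
    ∑ a ∈ Finset.range (r - 1), ∑ b ∈ Finset.range (r - 1),
        vIdem r k a * vIdem r l b * Nfus r a b c
      = Real.sqrt (r / 2) / Real.sin (k * π / r) *
          (if k = l then 1 else 0) * vIdem r k c := by
  set w : ℕ → ℝ := fun j => √(r / 2) / sin (j * π / r)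
  calc ∑ a ∈ range (r - 1), ∑ b ∈ range (r - 1), vIdem r k a * vIdem r l b * Nfus r a b c
      = ∑ j ∈ Icc 1 (r - 1), ∑ a ∈ range (r - 1), ∑ b ∈ range (r - 1),
          w j * vIdem r j c * ((vIdem r k a * vIdem r j a) * (vIdem r l b * vIdem r j b)) := by
        simp only [Nfus_eq_sum_vIdem r _ _ c (by omega), mul_sum]
        rw [sum_comm_cycle]
        refine sum_congr rfl fun j _ => sum_congr rfl fun a _ => sum_congr rfl fun b _ => ?_
        ring
    _ = ∑ j ∈ Icc 1 (r - 1), w j * vIdem r j c *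
          ((∑ a ∈ range (r - 1), vIdem r k a * vIdem r j a) *
            ∑ b ∈ range (r - 1), vIdem r l b * vIdem r j b) := by
        simp_rw [sum_mul_sum, mul_sum]
    _ = ∑ j ∈ Icc 1 (r - 1), w j * vIdem r j c *
          ((if k = j then 1 else 0) * if l = j then 1 else 0) := by
        refine sum_congr rfl fun j hj => ?_
        rw [mem_Icc] at hj
        rw [sum_vIdem_mul_vIdem r k j (by omega) (by omega) (by omega) (by omega),
          sum_vIdem_mul_vIdem r l j (by omega) (by omega) (by omega) (by omega)]
    _ = w k * (if k = l then 1 else 0) * vIdem r k c := by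
        by_cases hkl : k = l
        · subst hkl
          simp [mem_Icc, hk1, hk2]
        · rw [if_neg hkl, mul_zero, zero_mul]
          refine sum_eq_zero fun j _ => ?_
          obtain hkj | hkj := eq_or_ne k j
          · simp [hkj ▸ Ne.symm hkl]
          · simp [hkj]

/-- `v_k • v_l = (√(r/2)/sin(kπ/r)) δ_{k,l} v_k`, written in coordinates:
for every basis index `c`, the `e_c`-coordinate of `v_k • v_l` equals the
`e_c`-coordinate of `(√(r/2)/sin(kπ/r)) δ_{k,l} v_k`.  In particular the
rescaled vectors are idempotents, so the fusion algebra is semisimple. -/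
theorem stmt_6 (r : ℕ) (hr : 2 ≤ r) (k l : ℕ) (hk1 : 1 ≤ k) (hk2 : k ≤ r - 1)
    (hl1 : 1 ≤ l) (hl2 : l ≤ r - 1) (c : ℕ) (hc : c ≤ r - 2) :
    ∑ a ∈ Finset.range (r - 1), ∑ b ∈ Finset.range (r - 1),
        vIdem r k a * vIdem r l b * Nfus r a b c
      = Real.sqrt (r / 2) / Real.sin (k * π / r) *
          (if k = l then 1 else 0) * vIdem r k c :=
  stmt_6_general r k l hk1 hk2 hl1 hl2 c
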